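/- For every triple (τ_x, τ_y, τ_z) ∈ ℂ³ there exist matrices x₁, x₂ ∈ SL(2,ℂ) with tr(x₁) = τ_x, tr(x₂) = τ_y, and tr(x₁x₂⁻¹) = τ_z. -/

import Mathlib

/-!
With `M t u = !![t, -u; u⁻¹, 0] ∈ SL(2)` one has `tr (M t u) = t` and
`M s 1 * (M t u)⁻¹ = !![u⁻¹, s u - t; 0, u]`, whose trace is `u + u⁻¹`.
Over an algebraically closed field every `τ` is of the form `u + u⁻¹`: take a root of
`X² - τ X + 1`. So `x₁ = M τ_x 1`, `x₂ = M τ_y u` realize the triple.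
-/

open Matrix Polynomial

theorem exists_unit_add_inv_eq {K : Type*} [Field K] [IsAlgClosed K] (t : K) :
    ∃ u : Kˣ, (u : K) + ↑u⁻¹ = t := by
  have hdeg : (X ^ 2 - C t * X + 1 : K[X]).degree = 2 := by compute_degree!
  obtain ⟨μ, hμ⟩ := IsAlgClosed.exists_root (X ^ 2 - C t * X + 1 : K[X]) (by simp [hdeg])
  have hμt : μ * (t - μ) = 1 := by
    simp only [IsRoot, eval_add, eval_sub, eval_pow, eval_mul, eval_C, eval_X, eval_one] at hμ
    linear_combination -hμ
  exact ⟨Units.mkOfMulEqOne μ (t - μ) hμt, by simp [Units.mkOfMulEqOne]⟩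

section sl2WithTrace

variable {R : Type*} [CommRing R]

def sl2WithTrace (t : R) (u : Rˣ) : SpecialLinearGroup (Fin 2) R :=
  ⟨!![t, -u; ↑u⁻¹, 0], by simp [det_fin_two_of]⟩

theorem trace_sl2WithTrace (t : R) (u : Rˣ) :
    trace (sl2WithTrace t u : Matrix (Fin 2) (Fin 2) R) = t := by
  simp [sl2WithTrace, trace_fin_two]

theorem trace_sl2WithTrace_one_mul_inv (s t : R) (u : Rˣ) :
    trace ((sl2WithTrace s 1 * (sl2WithTrace t u)⁻¹ : SpecialLinearGroup (Fin 2) R) :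
      Matrix (Fin 2) (Fin 2) R) = u + ↑u⁻¹ := by
  change trace (!![s, -1; 1, 0] * adjugate !![t, -(u : R); ↑u⁻¹, 0]) = _
  simp [adjugate_fin_two, trace_fin_two, add_comm]

end sl2WithTrace

theorem trace_triple_surjective (tx ty tz : ℂ) :
    ∃ x₁ x₂ : Matrix.SpecialLinearGroup (Fin 2) ℂ,
      Matrix.trace (x₁ : Matrix (Fin 2) (Fin 2) ℂ) = tx ∧
      Matrix.trace (x₂ : Matrix (Fin 2) (Fin 2) ℂ) = ty ∧
      Matrix.trace ((x₁ * x₂⁻¹ : Matrix.SpecialLinearGroup (Fin 2) ℂ) :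
        Matrix (Fin 2) (Fin 2) ℂ) = tz := by
  obtain ⟨u, hu⟩ := exists_unit_add_inv_eq tz
  exact ⟨sl2WithTrace tx 1, sl2WithTrace ty u, trace_sl2WithTrace tx 1,
    trace_sl2WithTrace ty u, (trace_sl2WithTrace_one_mul_inv tx ty u).trans hu⟩
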